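/- arXiv:2112.11029 — 3 statements merged into one kernel-verified Lean document; each statement's English description precedes it below -/
import Mathlib

section
/- Suppose the kernel functions K_1,…,K_n are singular and J is an arbitrary n-field function. Let y ∈ S and j ∈ {0,1,…,n} with m_j(y) ≠ -∞. Let q > 0, η > 0 and Z ⊆ I_j(y) be such that for every x ∈ S̄ with ‖x - y‖ ≤ η: (i) Z ⊆ I_j(x) and |t - x_i| ≥ η for all t ∈ Z and i = 1,…,n; (ii) m_j(x) = sup_{t ∈ Z} F(x,t); (iii) F(x,t) ≥ m_j(x) - q for all t ∈ Z (such q, η, Z exist by the Z-q lemma). Set z_* := inf Z and z^* := sup Z. Then for every i = 1,…,n, denoting by e_i the i-th standard basis vector of ℝ^n: -D₋K_i(z_* - y_i) ≤ liminf_{h↓0} (m_j(y + h e_i) - m_j(y))/h ≤ limsup_{h↓0} (m_j(y + h e_i) - m_j(y))/h ≤ -D₋K_i(z^* - y_i), and -D₊K_i(z_* - y_i) ≤ liminf_{h↓0} (m_j(y - h e_i) - m_j(y))/(-h) ≤ limsup_{h↓0} (m_j(y - h e_i) - m_j(y))/(-h) ≤ -D₊K_i(z^* - y_i). -/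
open Set Filter
open scoped BigOperators Topology

noncomputable section

/-- The real part of an extended-real-valued function. -/
def toR (K : ℝ → EReal) : ℝ → ℝ := fun t => (K t).toReal

/-- A *kernel function*: finite-valued, continuous and concave on `[-1,0)` and `(0,1]`,
never `+∞`, and with coinciding one-sided limits at `0` (given by the value `K 0`). -/
structure IsKernel (K : ℝ → EReal) : Prop where
  ne_top : ∀ t, K t ≠ ⊤
  finite_left : ∀ t ∈ Ico (-1:ℝ) 0, K t ≠ ⊥
  finite_right : ∀ t ∈ Ioc (0:ℝ) 1, K t ≠ ⊥
  cont_left : ContinuousOn (toR K) (Ico (-1:ℝ) 0)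
  cont_right : ContinuousOn (toR K) (Ioc (0:ℝ) 1)
  concave_left : ConcaveOn ℝ (Ico (-1:ℝ) 0) (toR K)
  concave_right : ConcaveOn ℝ (Ioc (0:ℝ) 1) (toR K)
  tendsto_left : Tendsto K (nhdsWithin 0 (Iio 0)) (nhds (K 0))
  tendsto_right : Tendsto K (nhdsWithin 0 (Ioi 0)) (nhds (K 0))

/-- Left one-sided derivative. -/
def Dm (f : ℝ → ℝ) (t : ℝ) : ℝ := derivWithin f (Iio t) t

/-- Right one-sided derivative. -/
def Dp (f : ℝ → ℝ) (t : ℝ) : ℝ := derivWithin f (Ioi t) t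

/-- Condition (PM_c): periodized `c`-monotonicity. -/
def PMcond (K : ℝ → EReal) (c : ℝ) : Prop :=
  ∀ t ∈ Ioo (0:ℝ) 1, c ≤ Dm (toR K) t - Dm (toR K) (t - 1)

/-- An *n-field function*: bounded above, never `+∞`, finite at more than `n` points of
`[0,1]`, where the endpoints count with weight `1/2`. -/
structure IsNField (n : ℕ) (J : ℝ → EReal) : Prop where
  ne_top : ∀ t, J t ≠ ⊤
  bdd : ∃ M : ℝ, ∀ t ∈ Icc (0:ℝ) 1, J t ≤ (M : EReal)
  count : (∃ T : Finset ℝ, ↑T ⊆ {t | t ∈ Ioo (0:ℝ) 1 ∧ J t ≠ ⊥} ∧ n + 1 ≤ T.card) ∨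
    ((∃ T : Finset ℝ, ↑T ⊆ {t | t ∈ Ioo (0:ℝ) 1 ∧ J t ≠ ⊥} ∧ n ≤ T.card) ∧
      (J 0 ≠ ⊥ ∨ J 1 ≠ ⊥))

/-- The open simplex `S`. -/
def openSimplex (n : ℕ) : Set (Fin n → ℝ) :=
  {y | StrictMono y ∧ ∀ i, y i ∈ Ioo (0:ℝ) 1}

/-- The closed simplex `S̄`. -/
def closedSimplex (n : ℕ) : Set (Fin n → ℝ) :=
  {y | Monotone y ∧ ∀ i, y i ∈ Icc (0:ℝ) 1}

/-- The left endpoint `y_j` of `I_j(y)`, with the convention `y_0 = 0`. -/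
def nodeLo {n : ℕ} (y : Fin n → ℝ) (j : ℕ) : ℝ :=
  if h : 0 < j ∧ j ≤ n then y ⟨j - 1, by omega⟩ else 0

/-- The right endpoint `y_{j+1}` of `I_j(y)`, with the convention `y_{n+1} = 1`. -/
def nodeHi {n : ℕ} (y : Fin n → ℝ) (j : ℕ) : ℝ :=
  if h : j < n then y ⟨j, h⟩ else 1

/-- The interval `I_j(y) = [y_j, y_{j+1}]`. -/
def Ij {n : ℕ} (y : Fin n → ℝ) (j : ℕ) : Set ℝ := Icc (nodeLo y j) (nodeHi y j)

/-- The sum of translates function `F(y,t) = J(t) + ∑ K_j(t - y_j)`. -/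
def SOT {n : ℕ} (K : Fin n → ℝ → EReal) (J : ℝ → EReal) (y : Fin n → ℝ) (t : ℝ) : EReal :=
  J t + ∑ i, K i (t - y i)

/-- The interval maximum `m_j(y) = sup_{t ∈ I_j(y)} F(y,t)`. -/
def mj {n : ℕ} (K : Fin n → ℝ → EReal) (J : ℝ → EReal) (y : Fin n → ℝ) (j : ℕ) : EReal :=
  ⨆ t ∈ Ij y j, SOT K J y t

/-- The regularity set `Y`. -/
def regSet {n : ℕ} (K : Fin n → ℝ → EReal) (J : ℝ → EReal) : Set (Fin n → ℝ) :=
  {y ∈ openSimplex n | ∀ j ≤ n, mj K J y j ≠ ⊥}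

/-- The difference function `Φ(y) = (m_1 - m_0, …, m_n - m_{n-1})`. -/
def PhiFun {n : ℕ} (K : Fin n → ℝ → EReal) (J : ℝ → EReal) (y : Fin n → ℝ) : Fin n → ℝ :=
  fun i => (mj K J y ((i : ℕ) + 1)).toReal - (mj K J y (i : ℕ)).toReal

/-- A map between (pseudo)metric spaces is *locally bi-Lipschitz* if every point has a
neighborhood on which the map is a bi-Lipschitz homeomorphism onto its image. -/
def LocallyBiLipschitz {α β : Type*} [PseudoMetricSpace α] [PseudoMetricSpace β]
    (f : α → β) : Prop :=
  ∀ x : α, ∃ U ∈ 𝓝 x, ∃ c C : ℝ, 0 < c ∧ ∀ a ∈ U, ∀ b ∈ U,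
    c * dist a b ≤ dist (f a) (f b) ∧ dist (f a) (f b) ≤ C * dist a b

/-- The relative interior of `[a,b] ⊆ [0,1]` in the space `[0,1]`. -/
def relIntIcc (a b : ℝ) : Set ℝ :=
  (if a = 0 then Ici a else Ioi a) ∩ (if b = 1 then Iic b else Iio b)

/-- Condition `(∞₊)`. -/
def CondInfPlus (J : ℝ → EReal) : Prop :=
  J 0 = ⊥ ∧ Tendsto J (nhdsWithin 0 (Ioi 0)) (nhds ⊥)

/-- Condition `(∞₋)`. -/
def CondInfMinus (J : ℝ → EReal) : Prop :=
  J 1 = ⊥ ∧ Tendsto J (nhdsWithin 1 (Iio 1)) (nhds ⊥)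

/-- Fenton's cusp condition `(∞'₊)`. -/
def CuspPlus (J : ℝ → EReal) : Prop :=
  ∀ M : ℝ, ∃ δ > (0:ℝ), ∀ s t : ℝ, 0 ≤ s → s < t → t ≤ δ →
    J s ≠ ⊥ → J t ≠ ⊥ → M ≤ ((J t).toReal - (J s).toReal) / (t - s)

/-- Fenton's cusp condition `(∞'₋)`. -/
def CuspMinus (J : ℝ → EReal) : Prop :=
  ∀ M : ℝ, ∃ δ > (0:ℝ), ∀ t s : ℝ, 1 - δ ≤ t → t < s → s ≤ 1 →
    J s ≠ ⊥ → J t ≠ ⊥ → ((J t).toReal - (J s).toReal) / (t - s) ≤ -M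

/-- `L : [0,1] → [0,∞)` is log-concave:
`L(λs + (1-λ)t) ≥ L(s)^λ L(t)^{1-λ}`. -/
def LogConcaveOn01 (L : ℝ → ℝ) : Prop :=
  ∀ s ∈ Icc (0:ℝ) 1, ∀ t ∈ Icc (0:ℝ) 1, ∀ l ∈ Icc (0:ℝ) 1,
    L s ^ l * L t ^ (1 - l) ≤ L (l * s + (1 - l) * t)

/-!
Only the `i`-th node moves, by `e`, so on `Z` the sum of translates changes by
`K_i(t - y_i - e) - K_i(t - y_i) = e · (-slope K_i (t - y_i) (t - y_i - e))`. Since `Z` keeps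
distance `η` from all nodes, for small `e` these arguments stay in one concavity interval of
`K_i`, where the slope of a secant of fixed length is antitone in its position. Taking the
supremum over `Z`, which computes `m_j` both before and after the move, squeezes the difference
quotient of `m_j` between the secant slopes at `z_* - y_i` and `z^* - y_i`; these tend to the
one-sided derivatives of `K_i`.
-/

theorem ConcaveOn.slope_le_slope_of_le {C : Set ℝ} {g : ℝ → ℝ} (hg : ConcaveOn ℝ C g)
    {x y x' y' : ℝ} (hx : x ∈ C) (hy : y ∈ C) (hx' : x' ∈ C) (hy' : y' ∈ C)
    (hxx' : x ≤ x') (hyy' : y ≤ y') (hxy : x < y) (hx'y' : x' < y') :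
    slope g x' y' ≤ slope g x y :=
  calc slope g x' y' = slope g y' x' := slope_comm g x' y'
    _ ≤ slope g y' x := hg.slope_anti hy' ⟨hx, hxy.trans_le hyy' |>.ne⟩ ⟨hx', hx'y'.ne⟩ hxx'
    _ = slope g x y' := slope_comm g y' x
    _ ≤ slope g x y := hg.slope_anti hx ⟨hy, hxy.ne'⟩ ⟨hy', (hxy.trans_le hyy').ne'⟩ hyy'

theorem ConcaveOn.slope_add_le_slope_add {C : Set ℝ} {g : ℝ → ℝ} (hg : ConcaveOn ℝ C g)
    {a c w : ℝ} (hw : w ≠ 0) (hac : a ≤ c)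
    (ha : a ∈ C) (haw : a + w ∈ C) (hc : c ∈ C) (hcw : c + w ∈ C) :
    slope g c (c + w) ≤ slope g a (a + w) := by
  rcases hw.lt_or_gt with hw | hw
  · rw [slope_comm g c, slope_comm g a]
    exact hg.slope_le_slope_of_le haw ha hcw hc (by linarith) hac (by linarith) (by linarith)
  · exact hg.slope_le_slope_of_le ha haw hc hcw hac (by linarith) (by linarith) (by linarith)

theorem ConcaveOn.tendsto_slope_sub_Dm {C : Set ℝ} {g : ℝ → ℝ} (hg : ConcaveOn ℝ C g)
    {a : ℝ} (ha : a ∈ interior C) :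
    Tendsto (fun h => slope g a (a - h)) (𝓝[>] 0) (𝓝 (Dm g a)) := by
  have hderiv : HasDerivWithinAt g (Dm g a) (Iio a) a := by
    have hdiff := (hg.neg.differentiableWithinAt_Iio_of_mem_interior ha).neg
    rw [neg_neg] at hdiff
    exact hdiff.hasDerivWithinAt
  rw [hasDerivWithinAt_iff_tendsto_slope' self_notMem_Iio] at hderiv
  refine hderiv.comp (tendsto_nhdsWithin_iff.2 ⟨?_, ?_⟩)
  · simpa using ((continuous_sub_left a).tendsto 0).mono_left nhdsWithin_le_nhds
  · filter_upwards [self_mem_nhdsWithin] with h (hh : 0 < h)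
    simpa using hh

theorem ConcaveOn.tendsto_slope_add_Dp {C : Set ℝ} {g : ℝ → ℝ} (hg : ConcaveOn ℝ C g)
    {a : ℝ} (ha : a ∈ interior C) :
    Tendsto (fun h => slope g a (a + h)) (𝓝[>] 0) (𝓝 (Dp g a)) := by
  have hderiv : HasDerivWithinAt g (Dp g a) (Ioi a) a := by
    have hdiff := (hg.neg.differentiableWithinAt_Ioi_of_mem_interior ha).neg
    rw [neg_neg] at hdiff
    exact hdiff.hasDerivWithinAt
  rw [hasDerivWithinAt_iff_tendsto_slope' self_notMem_Ioi] at hderiv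
  refine hderiv.comp (tendsto_nhdsWithin_iff.2 ⟨?_, ?_⟩)
  · simpa using ((continuous_const_add a).tendsto 0).mono_left nhdsWithin_le_nhds
  · filter_upwards [self_mem_nhdsWithin] with h (hh : 0 < h)
    simpa using hh

theorem EReal.toReal_biSup_add_sub_mem_Icc {ι : Type*} {s : Set ι} {f : ι → EReal}
    {c : ι → ℝ} {lo hi : ℝ} (hc : ∀ t ∈ s, c t ∈ Icc lo hi)
    (hbot : ⨆ t ∈ s, f t ≠ ⊥) (htop : ⨆ t ∈ s, f t ≠ ⊤) :
    (⨆ t ∈ s, f t + c t).toReal - (⨆ t ∈ s, f t).toReal ∈ Icc lo hi := by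
  set A := ⨆ t ∈ s, f t
  set B := ⨆ t ∈ s, f t + c t
  have hB_le : B ≤ A + hi := iSup₂_le fun t ht =>
    add_le_add (le_iSup₂ (f := fun t _ => f t) t ht) (EReal.coe_le_coe_iff.2 (hc t ht).2)
  have hA_le : A ≤ B + (-lo : ℝ) := iSup₂_le fun t ht => calc
    f t = f t + (c t : EReal) + (-c t : ℝ) := by
        rw [add_assoc, ← EReal.coe_add, add_neg_cancel, EReal.coe_zero, add_zero]
    _ ≤ B + (-lo : ℝ) := add_le_add (le_iSup₂ (f := fun t _ => f t + c t) t ht)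
        (EReal.coe_le_coe_iff.2 (neg_le_neg (hc t ht).1))
  lift A to ℝ using ⟨htop, hbot⟩ with a
  have hBtop : B ≠ ⊤ := ne_top_of_le_ne_top (EReal.coe_add a hi ▸ EReal.coe_ne_top _) hB_le
  have hBbot : B ≠ ⊥ := by
    rintro hB
    rw [hB, EReal.bot_add] at hA_le
    exact EReal.coe_ne_bot a (le_bot_iff.1 hA_le)
  lift B to ℝ using ⟨hBtop, hBbot⟩ with b
  rw [← EReal.coe_add, EReal.coe_le_coe_iff] at hB_le hA_le
  simp only [EReal.toReal_coe, mem_Icc]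
  constructor <;> linarith

theorem EReal.toReal_biSup_add_mul_sub_div_mem_Icc {ι : Type*} {s : Set ι} {f : ι → EReal}
    {σ : ι → ℝ} {lo hi e : ℝ} (he : e ≠ 0) (hσ : ∀ t ∈ s, σ t ∈ Icc lo hi)
    (hbot : ⨆ t ∈ s, f t ≠ ⊥) (htop : ⨆ t ∈ s, f t ≠ ⊤) :
    ((⨆ t ∈ s, f t + (e * σ t : ℝ)).toReal - (⨆ t ∈ s, f t).toReal) / e ∈ Icc lo hi := by
  rcases he.lt_or_gt with he | he
  · have hc : ∀ t ∈ s, e * σ t ∈ Icc (e * hi) (e * lo) := fun t ht =>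
      ⟨mul_le_mul_of_nonpos_left (hσ t ht).2 he.le, mul_le_mul_of_nonpos_left (hσ t ht).1 he.le⟩
    obtain ⟨h₁, h₂⟩ := EReal.toReal_biSup_add_sub_mem_Icc hc hbot htop
    exact ⟨(le_div_iff_of_neg he).2 (by linarith), (div_le_iff_of_neg he).2 (by linarith)⟩
  · have hc : ∀ t ∈ s, e * σ t ∈ Icc (e * lo) (e * hi) := fun t ht =>
      ⟨mul_le_mul_of_nonneg_left (hσ t ht).1 he.le, mul_le_mul_of_nonneg_left (hσ t ht).2 he.le⟩
    obtain ⟨h₁, h₂⟩ := EReal.toReal_biSup_add_sub_mem_Icc hc hbot htop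
    exact ⟨(le_div_iff₀ he).2 (by linarith), (div_le_iff₀ he).2 (by linarith)⟩

theorem ConcaveOn.toReal_biSup_shift_sub_div_mem_Icc {ι : Type*} {s : Set ι} {f : ι → EReal}
    {u : ι → ℝ} {C : Set ℝ} {g : ℝ → ℝ} (hg : ConcaveOn ℝ C g) {a b e : ℝ} (he : e ≠ 0)
    (hu : ∀ t ∈ s, u t ∈ Icc a b) (ha : a ∈ C) (hae : a - e ∈ C) (hb : b ∈ C) (hbe : b - e ∈ C)
    (hbot : ⨆ t ∈ s, f t + g (u t) ≠ ⊥) (htop : ⨆ t ∈ s, f t + g (u t) ≠ ⊤) :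
    ((⨆ t ∈ s, f t + g (u t - e)).toReal - (⨆ t ∈ s, f t + g (u t)).toReal) / e ∈
      Icc (-slope g a (a - e)) (-slope g b (b - e)) := by
  have hmem : ∀ t ∈ s, u t ∈ C ∧ u t - e ∈ C := fun t ht =>
    ⟨hg.1.ordConnected.out ha hb (hu t ht),
      hg.1.ordConnected.out hae hbe ⟨by linarith [(hu t ht).1], by linarith [(hu t ht).2]⟩⟩
  have hslope : ∀ t ∈ s,
      -slope g (u t) (u t - e) ∈ Icc (-slope g a (a - e)) (-slope g b (b - e)) := by
    intro t ht
    obtain ⟨hut, hute⟩ := hmem t ht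
    simp only [sub_eq_add_neg, mem_Icc, neg_le_neg_iff] at hae hbe hute ⊢
    exact ⟨hg.slope_add_le_slope_add (neg_ne_zero.2 he) (hu t ht).1 ha hae hut hute,
      hg.slope_add_le_slope_add (neg_ne_zero.2 he) (hu t ht).2 hut hute hb hbe⟩
  have hshift : ∀ t, f t + (g (u t - e) : EReal) =
      f t + (g (u t) : EReal) + (e * -slope g (u t) (u t - e) : ℝ) := by
    intro t
    rw [add_assoc, ← EReal.coe_add, slope_def_field, show u t - e - u t = -e by ring]
    congr 2
    field_simp
    ring
  simp only [hshift]
  exact EReal.toReal_biSup_add_mul_sub_div_mem_Icc he hslope hbot htop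

theorem le_liminf_le_limsup_le_of_eventually_mem_Icc {α : Type*} {l : Filter α} [l.NeBot]
    {G lo hi : α → ℝ} {x y : ℝ} (hlo : Tendsto lo l (𝓝 x)) (hhi : Tendsto hi l (𝓝 y))
    (h : ∀ᶠ a in l, G a ∈ Icc (lo a) (hi a)) :
    (x : EReal) ≤ liminf (fun a => (G a : EReal)) l ∧
      liminf (fun a => (G a : EReal)) l ≤ limsup (fun a => (G a : EReal)) l ∧
      limsup (fun a => (G a : EReal)) l ≤ y := by
  refine ⟨?_, liminf_le_limsup, ?_⟩
  · rw [← (EReal.tendsto_coe.2 hlo).liminf_eq]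
    exact liminf_le_liminf (h.mono fun a ha => EReal.coe_le_coe_iff.2 ha.1)
  · rw [← (EReal.tendsto_coe.2 hhi).limsup_eq]
    exact limsup_le_limsup (h.mono fun a ha => EReal.coe_le_coe_iff.2 ha.2)

theorem IsKernel.exists_concave_piece {K : ℝ → EReal} (hK : IsKernel K) {a b : ℝ}
    (hab : Icc a b ⊆ Ioo 0 1 ∨ Icc a b ⊆ Ioo (-1) 0) :
    ∃ P, IsOpen P ∧ ConcaveOn ℝ P (toR K) ∧ (∀ u ∈ P, (toR K u : EReal) = K u) ∧
      Icc a b ⊆ P := by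
  rcases hab with hab | hab
  · exact ⟨Ioo 0 1, isOpen_Ioo, hK.concave_right.subset Ioo_subset_Ioc_self (convex_Ioo 0 1),
      fun u hu => EReal.coe_toReal (hK.ne_top u) (hK.finite_right u (Ioo_subset_Ioc_self hu)),
      hab⟩
  · exact ⟨Ioo (-1) 0, isOpen_Ioo, hK.concave_left.subset Ioo_subset_Ico_self (convex_Ioo _ 0),
      fun u hu => EReal.coe_toReal (hK.ne_top u) (hK.finite_left u (Ioo_subset_Ico_self hu)),
      hab⟩

theorem Icc_sInf_sub_sSup_sub_subset {Z : Set ℝ} {c η : ℝ} (hZ : Z ⊆ Icc 0 1)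
    (hne : Z.Nonempty) (hc : c ∈ Ioo 0 1) (hη : 0 < η)
    (hside : Z ⊆ Ici (c + η) ∨ Z ⊆ Iic (c - η)) :
    Icc (sInf Z - c) (sSup Z - c) ⊆ Ioo 0 1 ∨ Icc (sInf Z - c) (sSup Z - c) ⊆ Ioo (-1) 0 := by
  have hinf : 0 ≤ sInf Z := le_csInf hne fun t ht => (hZ ht).1
  have hsup : sSup Z ≤ 1 := csSup_le hne fun t ht => (hZ ht).2
  rcases hside with hside | hside
  · have := le_csInf hne hside
    exact .inl fun u hu => ⟨by linarith [hu.1], by linarith [hu.2, hc.1]⟩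
  · have := csSup_le hne hside
    exact .inr fun u hu => ⟨by linarith [hu.1, hc.2], by linarith [hu.2]⟩

theorem openSimplex_subset_closedSimplex (n : ℕ) : openSimplex n ⊆ closedSimplex n :=
  fun _ hy => ⟨hy.1.monotone, fun k => Ioo_subset_Icc_self (hy.2 k)⟩

theorem isOpen_openSimplex (n : ℕ) : IsOpen (openSimplex n) := by
  have hmono : IsOpen {y : Fin n → ℝ | StrictMono y} := by
    simp only [StrictMono, ofPred_forall]
    exact isOpen_iInter_of_finite fun k => isOpen_iInter_of_finite fun l =>
      isOpen_iInter_of_finite fun _ => isOpen_lt (continuous_apply k) (continuous_apply l)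
  have hbox : IsOpen {y : Fin n → ℝ | ∀ k, y k ∈ Ioo 0 1} := by
    simp only [ofPred_forall]
    exact isOpen_iInter_of_finite fun k => isOpen_Ioo.preimage (continuous_apply k)
  exact hmono.inter hbox

theorem eventually_add_single_mem_closedSimplex {n : ℕ} {y : Fin n → ℝ}
    (hy : y ∈ openSimplex n) {η : ℝ} (hη : 0 < η) (i : Fin n) :
    ∀ᶠ e in 𝓝 (0:ℝ), y + Pi.single i e ∈ closedSimplex n ∧ dist (y + Pi.single i e) y ≤ η := by
  have hcont : Tendsto (fun e : ℝ => y + Pi.single i e) (𝓝 0) (𝓝 y) :=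
    (continuous_const.add (continuous_single i)).tendsto' 0 y (by simp)
  filter_upwards [hcont.eventually ((isOpen_openSimplex n).mem_nhds hy),
    hcont.eventually (Metric.closedBall_mem_nhds y hη)] with e hS hball
  exact ⟨openSimplex_subset_closedSimplex n hS, hball⟩

theorem Ij_subset_Icc {n : ℕ} {y : Fin n → ℝ} (hy : y ∈ closedSimplex n) (j : ℕ) :
    Ij y j ⊆ Icc 0 1 := by
  refine Icc_subset_Icc ?_ ?_
  · unfold nodeLo; split_ifs
    exacts [(hy.2 _).1, le_rfl]
  · unfold nodeHi; split_ifs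
    exacts [(hy.2 _).2, le_rfl]

theorem Ij_subset_Ici_or_Iic {n : ℕ} {y : Fin n → ℝ} (hy : Monotone y) {j : ℕ} (hj : j ≤ n)
    (i : Fin n) : Ij y j ⊆ Ici (y i) ∨ Ij y j ⊆ Iic (y i) := by
  by_cases hij : (i : ℕ) < j
  · refine .inl fun t ht => le_trans ?_ ht.1
    rw [nodeLo, dif_pos ⟨by omega, hj⟩]
    exact hy (Fin.le_def.2 (by simp; omega))
  · refine .inr fun t ht => ht.2.trans ?_
    rw [nodeHi, dif_pos (by omega)]
    exact hy (Fin.le_def.2 (by simp; omega))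

theorem SOT_ne_top {n : ℕ} {K : Fin n → ℝ → EReal} {J : ℝ → EReal} (hK : ∀ k t, K k t ≠ ⊤)
    (hJ : ∀ t, J t ≠ ⊤) (x : Fin n → ℝ) (t : ℝ) : SOT K J x t ≠ ⊤ :=
  EReal.add_ne_top (hJ t) <|
    Finset.sum_induction _ (· ≠ ⊤) (fun _ _ => EReal.add_ne_top) (by simp) fun k _ => hK k _

theorem SOT_add_single {n : ℕ} (K : Fin n → ℝ → EReal) (J : ℝ → EReal) (y : Fin n → ℝ)
    (i : Fin n) (e t : ℝ) :
    SOT K J (y + Pi.single i e) t =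
      J t + ∑ k ∈ Finset.univ.erase i, K k (t - y k) + K i (t - y i - e) := by
  rw [SOT, ← Finset.add_sum_erase _ _ (Finset.mem_univ i), Finset.sum_congr rfl fun k hk => by
    rw [Pi.add_apply, Pi.single_eq_of_ne (Finset.ne_of_mem_erase hk), add_zero]]
  simp only [Pi.add_apply, Pi.single_eq_same, sub_add_eq_sub_sub]
  ac_rfl

/-- Conditions (i)–(iii) on `Z`, as produced by the Z-q lemma. -/
def IsZqSet {n : ℕ} (K : Fin n → ℝ → EReal) (J : ℝ → EReal) (y : Fin n → ℝ) (j : ℕ)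
    (q η : ℝ) (Z : Set ℝ) : Prop :=
  ∀ x ∈ closedSimplex n, dist x y ≤ η →
    (Z ⊆ Ij x j ∧ ∀ t ∈ Z, ∀ i, η ≤ |t - x i|) ∧
    mj K J x j = (⨆ t ∈ Z, SOT K J x t) ∧
    ∀ t ∈ Z, mj K J x j - (q : EReal) ≤ SOT K J x t

namespace IsZqSet

variable {n : ℕ} {K : Fin n → ℝ → EReal} {J : ℝ → EReal} {y : Fin n → ℝ} {j : ℕ} {q η : ℝ}
  {Z : Set ℝ}

theorem at_self (hZ : IsZqSet K J y j q η Z) (hy : y ∈ openSimplex n) (hη : 0 < η) :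
    (Z ⊆ Ij y j ∧ ∀ t ∈ Z, ∀ i, η ≤ |t - y i|) ∧ mj K J y j = (⨆ t ∈ Z, SOT K J y t) ∧
      ∀ t ∈ Z, mj K J y j - (q : EReal) ≤ SOT K J y t :=
  hZ y (openSimplex_subset_closedSimplex n hy) (by rw [dist_self]; exact hη.le)

theorem nonempty (hZ : IsZqSet K J y j q η Z) (hy : y ∈ openSimplex n) (hη : 0 < η)
    (hm : mj K J y j ≠ ⊥) : Z.Nonempty :=
  nonempty_iff_ne_empty.2 fun hZe => hm (by simp [(hZ.at_self hy hη).2.1, hZe])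

theorem subset_Icc (hZ : IsZqSet K J y j q η Z) (hy : y ∈ openSimplex n) (hη : 0 < η) :
    Z ⊆ Icc 0 1 :=
  (hZ.at_self hy hη).1.1.trans (Ij_subset_Icc (openSimplex_subset_closedSimplex n hy) j)

theorem mj_ne_top (hZ : IsZqSet K J y j q η Z) (hK : ∀ k t, K k t ≠ ⊤) (hJ : ∀ t, J t ≠ ⊤)
    (hy : y ∈ openSimplex n) (hη : 0 < η) (hne : Z.Nonempty) : mj K J y j ≠ ⊤ := by
  obtain ⟨t, ht⟩ := hne
  intro htop
  have hq := (hZ.at_self hy hη).2.2 t ht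
  rw [htop, EReal.top_sub_coe, top_le_iff] at hq
  exact SOT_ne_top hK hJ y t hq

theorem exists_concave_piece (hZ : IsZqSet K J y j q η Z) (hK : ∀ k, IsKernel (K k))
    (hy : y ∈ openSimplex n) (hj : j ≤ n) (hm : mj K J y j ≠ ⊥) (hη : 0 < η) (i : Fin n) :
    ∃ P, IsOpen P ∧ ConcaveOn ℝ P (toR (K i)) ∧ (∀ u ∈ P, (toR (K i) u : EReal) = K i u) ∧
      sInf Z - y i ∈ P ∧ sSup Z - y i ∈ P := by
  obtain ⟨⟨hZy, hsep⟩, -, -⟩ := hZ.at_self hy hη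
  have hside : Z ⊆ Ici (y i + η) ∨ Z ⊆ Iic (y i - η) := by
    rcases Ij_subset_Ici_or_Iic hy.1.monotone hj i with hI | hI
    · refine .inl fun t ht => ?_
      have := hsep t ht i
      rw [abs_of_nonneg (sub_nonneg.2 (hI (hZy ht)))] at this
      exact show y i + η ≤ t by linarith
    · refine .inr fun t ht => ?_
      have := hsep t ht i
      rw [abs_of_nonpos (sub_nonpos.2 (hI (hZy ht)))] at this
      exact show t ≤ y i - η by linarith
  have hne := hZ.nonempty hy hη hm
  have hZ01 := hZ.subset_Icc hy hη
  obtain ⟨P, hPo, hgP, hKP, hZP⟩ := (hK i).exists_concave_piece <|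
    Icc_sInf_sub_sSup_sub_subset hZ01 hne (hy.2 i) hη hside
  have hab : sInf Z - y i ≤ sSup Z - y i := sub_le_sub_right
    (csInf_le_csSup hne ⟨0, fun t ht => (hZ01 ht).1⟩ ⟨1, fun t ht => (hZ01 ht).2⟩) _
  exact ⟨P, hPo, hgP, hKP, hZP ⟨le_rfl, hab⟩, hZP ⟨hab, le_rfl⟩⟩

theorem eventually_mj_quotient_mem_Icc (hZ : IsZqSet K J y j q η Z) (hK : ∀ k, IsKernel (K k))
    (hJ : ∀ t, J t ≠ ⊤) (hy : y ∈ openSimplex n) (hm : mj K J y j ≠ ⊥) (hη : 0 < η)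
    {i : Fin n} {P : Set ℝ} (hPo : IsOpen P) (hgP : ConcaveOn ℝ P (toR (K i)))
    (hKP : ∀ u ∈ P, (toR (K i) u : EReal) = K i u) (ha : sInf Z - y i ∈ P) (hb : sSup Z - y i ∈ P) :
    ∀ᶠ e in 𝓝[≠] (0:ℝ),
      ((mj K J (y + Pi.single i e) j).toReal - (mj K J y j).toReal) / e ∈
        Icc (-slope (toR (K i)) (sInf Z - y i) (sInf Z - y i - e))
          (-slope (toR (K i)) (sSup Z - y i) (sSup Z - y i - e)) := by
  set a := sInf Z - y i
  set b := sSup Z - y i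
  have hne := hZ.nonempty hy hη hm
  have hZ01 := hZ.subset_Icc hy hη
  have hu : ∀ t ∈ Z, t - y i ∈ Icc a b := fun t ht =>
    ⟨sub_le_sub_right (csInf_le ⟨0, fun s hs => (hZ01 hs).1⟩ ht) _,
      sub_le_sub_right (le_csSup ⟨1, fun s hs => (hZ01 hs).2⟩ ht) _⟩
  have hshift : ∀ v ∈ P, ∀ᶠ e in 𝓝 (0:ℝ), v - e ∈ P := fun v hv =>
    ((continuous_sub_left v).tendsto' 0 v (sub_zero v)).eventually (hPo.mem_nhds hv)
  have hsplit : ∀ e t, t - y i - e ∈ P → SOT K J (y + Pi.single i e) t =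
      J t + ∑ k ∈ Finset.univ.erase i, K k (t - y k) + (toR (K i) (t - y i - e) : EReal) :=
    fun e t hP => by rw [SOT_add_single, hKP _ hP]
  obtain ⟨-, hmy, -⟩ := hZ.at_self hy hη
  have hmy' : mj K J y j = ⨆ t ∈ Z,
      J t + ∑ k ∈ Finset.univ.erase i, K k (t - y k) + (toR (K i) (t - y i) : EReal) := by
    rw [hmy]
    refine biSup_congr fun t ht => ?_
    simpa using hsplit 0 t (by simpa using hgP.1.ordConnected.out ha hb (hu t ht))
  filter_upwards [nhdsWithin_le_nhds (eventually_add_single_mem_closedSimplex hy hη i),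
    nhdsWithin_le_nhds (hshift a ha), nhdsWithin_le_nhds (hshift b hb), self_mem_nhdsWithin]
    with e ⟨hxS, hxy⟩ hae hbe (he : e ≠ 0)
  have hmx : mj K J (y + Pi.single i e) j = ⨆ t ∈ Z,
      J t + ∑ k ∈ Finset.univ.erase i, K k (t - y k) + (toR (K i) (t - y i - e) : EReal) := by
    rw [(hZ _ hxS hxy).2.1]
    refine biSup_congr fun t ht => hsplit e t ?_
    exact hgP.1.ordConnected.out hae hbe ⟨by linarith [(hu t ht).1], by linarith [(hu t ht).2]⟩
  have hmtop := hZ.mj_ne_top (fun k => (hK k).ne_top) hJ hy hη hne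
  rw [hmy'] at hm hmtop ⊢
  rw [hmx]
  exact hgP.toReal_biSup_shift_sub_div_mem_Icc he hu ha hae hb hbe hm hmtop

end IsZqSet

theorem Dini_derivative_estimates_general
    {n : ℕ} (K : Fin n → ℝ → EReal) (J : ℝ → EReal)
    (hK : ∀ i, IsKernel (K i)) (hJ : IsNField n J)
    (y : Fin n → ℝ) (hy : y ∈ openSimplex n)
    (j : ℕ) (hj : j ≤ n) (hm : mj K J y j ≠ ⊥)
    (q η : ℝ) (hη : 0 < η)
    (Z : Set ℝ)
    (hprop : ∀ x ∈ closedSimplex n, dist x y ≤ η →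
      (Z ⊆ Ij x j ∧ ∀ t ∈ Z, ∀ i, η ≤ |t - x i|) ∧
      mj K J x j = (⨆ t ∈ Z, SOT K J x t) ∧
      ∀ t ∈ Z, mj K J x j - (q : EReal) ≤ SOT K J x t) :
    ∀ i : Fin n,
      -- the right-sided difference quotient of `m_j` in direction `e_i`
      (∀ gplus : ℝ → EReal, (gplus = fun h : ℝ =>
          ((((mj K J (fun k => y k + if k = i then h else 0) j).toReal
              - (mj K J y j).toReal) / h : ℝ) : EReal)) →
        (↑(-(Dm (toR (K i)) (sInf Z - y i))) : EReal) ≤ liminf gplus (𝓝[>] (0:ℝ)) ∧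
        liminf gplus (𝓝[>] (0:ℝ)) ≤ limsup gplus (𝓝[>] (0:ℝ)) ∧
        limsup gplus (𝓝[>] (0:ℝ)) ≤ (↑(-(Dm (toR (K i)) (sSup Z - y i))) : EReal)) ∧
      -- the left-sided difference quotient of `m_j` in direction `e_i`
      (∀ gminus : ℝ → EReal, (gminus = fun h : ℝ =>
          ((((mj K J (fun k => y k - if k = i then h else 0) j).toReal
              - (mj K J y j).toReal) / (-h) : ℝ) : EReal)) →
        (↑(-(Dp (toR (K i)) (sInf Z - y i))) : EReal) ≤ liminf gminus (𝓝[>] (0:ℝ)) ∧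
        liminf gminus (𝓝[>] (0:ℝ)) ≤ limsup gminus (𝓝[>] (0:ℝ)) ∧
        limsup gminus (𝓝[>] (0:ℝ)) ≤ (↑(-(Dp (toR (K i)) (sSup Z - y i))) : EReal)) := by
  intro i
  obtain ⟨P, hPo, hgP, hKP, ha, hb⟩ := IsZqSet.exists_concave_piece hprop hK hy hj hm hη i
  have hev := IsZqSet.eventually_mj_quotient_mem_Icc hprop hK hJ.ne_top hy hm hη hPo hgP hKP ha hb
  rw [← hPo.interior_eq] at ha hb
  refine ⟨?_, ?_⟩
  · rintro _ rfl
    have hx : ∀ h, (fun k => y k + if k = i then h else 0) = y + Pi.single i h := fun h => by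
      ext k; simp [Pi.single_apply]
    simp only [hx]
    exact le_liminf_le_limsup_le_of_eventually_mem_Icc (hgP.tendsto_slope_sub_Dm ha).neg
      (hgP.tendsto_slope_sub_Dm hb).neg (hev.filter_mono (nhdsGT_le_nhdsNE 0))
  · rintro _ rfl
    have hx : ∀ h, (fun k => y k - if k = i then h else 0) = y + Pi.single i (-h) := fun h => by
      ext k; by_cases hk : k = i <;> simp [hk, sub_eq_add_neg]
    have hneg : Tendsto Neg.neg (𝓝[>] (0:ℝ)) (𝓝[≠] 0) := by
      simpa using (tendsto_neg_nhdsGT (a := (0:ℝ))).mono_right (nhdsLT_le_nhdsNE _)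
    have hev' := hneg.eventually hev
    simp only [sub_neg_eq_add] at hev'
    simp only [hx]
    exact le_liminf_le_limsup_le_of_eventually_mem_Icc (hgP.tendsto_slope_add_Dp ha).neg
      (hgP.tendsto_slope_add_Dp hb).neg hev'

/-- (Lemma 5.2 / `lem:Demyanov-formula`.) Dini derivative estimates for
the interval maxima: with `Z = Z_j(y,q)`, `z_* = inf Z`, `z^* = sup Z`, for every `i`,
`-D₋K_i(z_* - y_i) ≤ liminf_{h↓0} (m_j(y+he_i)-m_j(y))/h
 ≤ limsup_{h↓0} (m_j(y+he_i)-m_j(y))/h ≤ -D₋K_i(z^* - y_i)`,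
and analogously for the left-sided Dini derivatives with `D₊`. -/
theorem Dini_derivative_estimates
    {n : ℕ} (hn : 1 ≤ n) (K : Fin n → ℝ → EReal) (J : ℝ → EReal)
    (hK : ∀ i, IsKernel (K i)) (hsing : ∀ i, K i 0 = ⊥) (hJ : IsNField n J)
    (y : Fin n → ℝ) (hy : y ∈ openSimplex n)
    (j : ℕ) (hj : j ≤ n) (hm : mj K J y j ≠ ⊥)
    (q η : ℝ) (hq : 0 < q) (hη : 0 < η)
    (Z : Set ℝ) (hZ : Z ⊆ Ij y j)
    (hprop : ∀ x ∈ closedSimplex n, dist x y ≤ η →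
      (Z ⊆ Ij x j ∧ ∀ t ∈ Z, ∀ i, η ≤ |t - x i|) ∧
      mj K J x j = (⨆ t ∈ Z, SOT K J x t) ∧
      ∀ t ∈ Z, mj K J x j - (q : EReal) ≤ SOT K J x t) :
    ∀ i : Fin n,
      -- the right-sided difference quotient of `m_j` in direction `e_i`
      (∀ gplus : ℝ → EReal, (gplus = fun h : ℝ =>
          ((((mj K J (fun k => y k + if k = i then h else 0) j).toReal
              - (mj K J y j).toReal) / h : ℝ) : EReal)) →
        (↑(-(Dm (toR (K i)) (sInf Z - y i))) : EReal) ≤ liminf gplus (𝓝[>] (0:ℝ)) ∧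
        liminf gplus (𝓝[>] (0:ℝ)) ≤ limsup gplus (𝓝[>] (0:ℝ)) ∧
        limsup gplus (𝓝[>] (0:ℝ)) ≤ (↑(-(Dm (toR (K i)) (sSup Z - y i))) : EReal)) ∧
      -- the left-sided difference quotient of `m_j` in direction `e_i`
      (∀ gminus : ℝ → EReal, (gminus = fun h : ℝ =>
          ((((mj K J (fun k => y k - if k = i then h else 0) j).toReal
              - (mj K J y j).toReal) / (-h) : ℝ) : EReal)) →
        (↑(-(Dp (toR (K i)) (sInf Z - y i))) : EReal) ≤ liminf gminus (𝓝[>] (0:ℝ)) ∧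
        liminf gminus (𝓝[>] (0:ℝ)) ≤ limsup gminus (𝓝[>] (0:ℝ)) ∧
        limsup gminus (𝓝[>] (0:ℝ)) ≤ (↑(-(Dp (toR (K i)) (sSup Z - y i))) : EReal)) :=
  Dini_derivative_estimates_general K J hK hJ y hy j hj hm q η hη Z hprop

end
end

section
/- Let K_1,…,K_n be kernel functions satisfying condition (PM_c) for some c > 0. Let y ∈ S, and for each j ∈ {0,1,…,n} let t_{*j} ≤ t*_j be two points in relint I_j(y). For each j ∈ {0,1,…,n} and r ∈ {1,…,n} let μ_{jr} be an arbitrary number in the interval [D₋K_r(t*_j - y_r), D₋K_r(t_{*j} - y_r)]. Then the n×n matrix A = [a_{jr}]_{j,r=1}^n with entries a_{jr} := μ_{jr} - μ_{(j-1)r} satisfies a_{rr} - Σ_{j=1, j≠r}^n |a_{jr}| ≥ c for every r = 1,…,n; in particular A is diagonally dominant and hence invertible. -/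
open Set Filter
open scoped BigOperators Topology

noncomputable section

/-! In column `r` of `A`, the test points of every row `j ≠ r` lie on one side of `y_r`, where
concavity of `K_r` makes `D₋K_r` nonincreasing; hence the off-diagonal entries are `≤ 0` and
`a_rr - ∑_{j ≠ r} |a_jr|` is the column sum. That sum telescopes to `μ_{nr} - μ_{0r}`, which is
at least `D₋K_r(s + 1) - D₋K_r(s) ≥ c` for `s = t_{*0} - y_r`, because `t*_n ≤ 1 ≤ t_{*0} + 1`. -/

lemma ConcaveOn.antitoneOn_leftDeriv {S : Set ℝ} {f : ℝ → ℝ} (hf : ConcaveOn ℝ S f) :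
    AntitoneOn (fun x ↦ derivWithin f (Iio x) x) (interior S) := by
  intro x hx y hy hxy
  simpa [derivWithin.neg] using hf.neg.monotoneOn_leftDeriv hx hy hxy

lemma Fin.sum_succ_sub_castSucc {M : Type*} [AddCommGroup M] {n : ℕ} (f : Fin (n + 1) → M) :
    ∑ i : Fin n, (f i.succ - f i.castSucc) = f (Fin.last n) - f 0 := by
  induction n with
  | zero => simp
  | succ n ih =>
    simp only [Fin.sum_univ_castSucc, Fin.succ_castSucc, ih (fun i ↦ f i.castSucc),
      Fin.succ_last, Fin.castSucc_zero]
    abel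

lemma Finset.sub_sum_erase_abs_eq_sum {ι : Type*} [DecidableEq ι] {s : Finset ι} {r : ι}
    {v : ι → ℝ} (hr : r ∈ s) (hv : ∀ j ∈ s, j ≠ r → v j ≤ 0) :
    v r - ∑ j ∈ s.erase r, |v j| = ∑ j ∈ s, v j := by
  rw [← Finset.add_sum_erase s v hr, sub_eq_add_neg, ← Finset.sum_neg_distrib]
  congr 1
  refine Finset.sum_congr rfl fun j hj ↦ ?_
  rw [abs_of_nonpos (hv j (Finset.mem_of_mem_erase hj) (Finset.ne_of_mem_erase hj)), neg_neg]

lemma Matrix.det_ne_zero_of_forall_sum_abs_lt_diag {ι : Type*} [Fintype ι] [DecidableEq ι]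
    (A : Matrix ι ι ℝ) (h : ∀ k, ∑ i ∈ Finset.univ.erase k, |A i k| < A k k) : A.det ≠ 0 :=
  det_ne_zero_of_sum_col_lt_diag fun k ↦ by
    simpa only [Real.norm_eq_abs] using (h k).trans_le (le_abs_self _)

section Nodes

variable {n : ℕ} {y : Fin n → ℝ} {a b s t : ℝ}

lemma relIntIcc_subset_Icc : relIntIcc a b ⊆ Icc a b := by
  rintro t ⟨ha, hb⟩
  constructor
  · split_ifs at ha
    exacts [ha, le_of_lt ha]
  · split_ifs at hb
    exacts [hb, le_of_lt hb]

lemma lt_of_mem_relIntIcc_of_ne_zero (ht : t ∈ relIntIcc a b) (ha : a ≠ 0) : a < t := by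
  simpa [relIntIcc, ha] using ht.1

lemma lt_of_mem_relIntIcc_of_ne_one (ht : t ∈ relIntIcc a b) (hb : b ≠ 1) : t < b := by
  simpa [relIntIcc, hb] using ht.2

lemma nodeLo_zero : nodeLo y 0 = 0 := dif_neg (by omega)

lemma nodeLo_succ {j : ℕ} (hj : j < n) : nodeLo y (j + 1) = y ⟨j, hj⟩ :=
  dif_pos ⟨j.succ_pos, hj⟩

lemma nodeHi_of_lt {j : ℕ} (hj : j < n) : nodeHi y j = y ⟨j, hj⟩ := dif_pos hj

lemma nodeHi_self : nodeHi y n = 1 := dif_neg (lt_irrefl n)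

lemma le_of_mem_relIntIcc_node_succ {j : ℕ} (hj : j < n)
    (hs : s ∈ relIntIcc (nodeLo y j) (nodeHi y j))
    (ht : t ∈ relIntIcc (nodeLo y (j + 1)) (nodeHi y (j + 1))) : s ≤ t :=
  calc s ≤ nodeHi y j := (relIntIcc_subset_Icc hs).2
    _ = nodeLo y (j + 1) := by rw [nodeHi_of_lt hj, nodeLo_succ hj]
    _ ≤ t := (relIntIcc_subset_Icc ht).1

lemma nodeLo_nonneg (hy : y ∈ openSimplex n) (j : ℕ) : 0 ≤ nodeLo y j := by
  unfold nodeLo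
  split_ifs
  exacts [(hy.2 _).1.le, le_rfl]

lemma nodeHi_le_one (hy : y ∈ openSimplex n) (j : ℕ) : nodeHi y j ≤ 1 := by
  unfold nodeHi
  split_ifs
  exacts [(hy.2 _).2.le, le_rfl]

lemma sub_mem_Ioo_neg_one_zero (hy : y ∈ openSimplex n) {r : Fin n} {j : ℕ} (hjr : j ≤ r)
    (ht : t ∈ relIntIcc (nodeLo y j) (nodeHi y j)) : t - y r ∈ Ioo (-1) 0 := by
  have hj : j < n := hjr.trans_lt r.isLt
  have hty : t < y ⟨j, hj⟩ := by
    rw [nodeHi_of_lt hj] at ht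
    exact lt_of_mem_relIntIcc_of_ne_one ht (hy.2 _).2.ne
  have hyy : y ⟨j, hj⟩ ≤ y r := hy.1.monotone hjr
  have ht0 : 0 ≤ t := (nodeLo_nonneg hy j).trans (relIntIcc_subset_Icc ht).1
  constructor <;> linarith [(hy.2 r).2]

lemma sub_mem_Ioo_zero_one (hy : y ∈ openSimplex n) {r : Fin n} {j : ℕ} (hrj : r < j)
    (hjn : j ≤ n) (ht : t ∈ relIntIcc (nodeLo y j) (nodeHi y j)) : t - y r ∈ Ioo 0 1 := by
  obtain ⟨i, rfl⟩ : ∃ i, j = i + 1 := ⟨j - 1, by omega⟩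
  have hi : i < n := by omega
  have hyt : y ⟨i, hi⟩ < t := by
    rw [nodeLo_succ hi] at ht
    exact lt_of_mem_relIntIcc_of_ne_zero ht (hy.2 _).1.ne'
  have hyy : y r ≤ y ⟨i, hi⟩ := hy.1.monotone (show (r : ℕ) ≤ i by omega)
  have ht1 : t ≤ 1 := (relIntIcc_subset_Icc ht).2.trans (nodeHi_le_one hy _)
  constructor <;> linarith [(hy.2 r).1]

end Nodes

section Kernel

variable {K : ℝ → EReal} {c : ℝ}

lemma IsKernel.antitoneOn_Dm_neg (hK : IsKernel K) : AntitoneOn (Dm (toR K)) (Ioo (-1) 0) := by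
  rw [← interior_Ico]
  exact hK.concave_left.antitoneOn_leftDeriv

lemma IsKernel.antitoneOn_Dm_pos (hK : IsKernel K) : AntitoneOn (Dm (toR K)) (Ioo 0 1) := by
  rw [← interior_Ioc]
  exact hK.concave_right.antitoneOn_leftDeriv

lemma PMcond.le_Dm_sub_Dm_of_le_add_one (hK : IsKernel K) (hPM : PMcond K c) {s u : ℝ}
    (hs : s ∈ Ioo (-1) 0) (hu : u ∈ Ioo 0 1) (hus : u ≤ s + 1) :
    c ≤ Dm (toR K) u - Dm (toR K) s := by
  have hs1 : s + 1 ∈ Ioo (0 : ℝ) 1 := ⟨by linarith [hs.1], by linarith [hs.2]⟩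
  have hPMs := hPM (s + 1) hs1
  rw [add_sub_cancel_right] at hPMs
  linarith [hK.antitoneOn_Dm_pos hu hs1 hus]

variable {n : ℕ} {y : Fin n → ℝ} {s t : ℝ}

lemma IsKernel.Dm_le_Dm_of_ne (hK : IsKernel K) (hy : y ∈ openSimplex n) {r j : Fin n}
    (hjr : j ≠ r) (hs : s ∈ relIntIcc (nodeLo y j) (nodeHi y j))
    (ht : t ∈ relIntIcc (nodeLo y (j + 1)) (nodeHi y (j + 1))) :
    Dm (toR K) (t - y r) ≤ Dm (toR K) (s - y r) := by
  have hst : s - y r ≤ t - y r := by linarith [le_of_mem_relIntIcc_node_succ j.isLt hs ht]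
  rcases (Fin.val_ne_of_ne hjr).lt_or_gt with hlt | hgt
  · exact hK.antitoneOn_Dm_neg (sub_mem_Ioo_neg_one_zero hy hlt.le hs)
      (sub_mem_Ioo_neg_one_zero hy hlt ht) hst
  · exact hK.antitoneOn_Dm_pos (sub_mem_Ioo_zero_one hy hgt j.isLt.le hs)
      (sub_mem_Ioo_zero_one hy (hgt.trans (j : ℕ).lt_add_one) j.isLt ht) hst

lemma PMcond.le_Dm_sub_Dm_of_mem_relIntIcc (hK : IsKernel K) (hPM : PMcond K c)
    (hy : y ∈ openSimplex n) (r : Fin n) (hs : s ∈ relIntIcc (nodeLo y 0) (nodeHi y 0))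
    (ht : t ∈ relIntIcc (nodeLo y n) (nodeHi y n)) :
    c ≤ Dm (toR K) (t - y r) - Dm (toR K) (s - y r) := by
  have hs0 : 0 ≤ s := nodeLo_zero (y := y) ▸ (relIntIcc_subset_Icc hs).1
  have ht1 : t ≤ 1 := nodeHi_self (y := y) ▸ (relIntIcc_subset_Icc ht).2
  exact hPM.le_Dm_sub_Dm_of_le_add_one hK (sub_mem_Ioo_neg_one_zero hy (Nat.zero_le _) hs)
    (sub_mem_Ioo_zero_one hy r.isLt le_rfl ht) (by linarith)

end Kernel

theorem diagonally_dominant_matrix_lemma_general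
    {n : ℕ} (K : Fin n → ℝ → EReal)
    (hK : ∀ i, IsKernel (K i))
    (c : ℝ) (hc : 0 < c) (hPM : ∀ i, PMcond (K i) c)
    (y : Fin n → ℝ) (hy : y ∈ openSimplex n)
    (tlo thi : Fin (n + 1) → ℝ)
    (hlo : ∀ j : Fin (n + 1), tlo j ∈ relIntIcc (nodeLo y (j : ℕ)) (nodeHi y (j : ℕ)))
    (hhi : ∀ j : Fin (n + 1), thi j ∈ relIntIcc (nodeLo y (j : ℕ)) (nodeHi y (j : ℕ)))
    (μ : Fin (n + 1) → Fin n → ℝ)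
    (hμ : ∀ j r, μ j r ∈ Icc (Dm (toR (K r)) (thi j - y r)) (Dm (toR (K r)) (tlo j - y r))) :
    (∀ r : Fin n,
        c ≤ (μ r.succ r - μ r.castSucc r) -
          ∑ j ∈ Finset.univ.erase r, |μ j.succ r - μ j.castSucc r|) ∧
    (Matrix.of fun j r : Fin n => μ j.succ r - μ j.castSucc r).det ≠ 0 := by
  have hoffDiag : ∀ r j : Fin n, j ≠ r → μ j.succ r - μ j.castSucc r ≤ 0 := fun r j hjr ↦
    sub_nonpos.2 <| (hμ j.succ r).2.trans <| ((hK r).Dm_le_Dm_of_ne hy hjr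
      (by simpa using hhi j.castSucc) (by simpa using hlo j.succ)).trans (hμ j.castSucc r).1
  have hcolSum : ∀ r : Fin n, c ≤ ∑ j : Fin n, (μ j.succ r - μ j.castSucc r) := fun r ↦ by
    rw [Fin.sum_succ_sub_castSucc fun j ↦ μ j r]
    linarith [(hPM r).le_Dm_sub_Dm_of_mem_relIntIcc (hK r) hy r (hlo 0)
      (by simpa using hhi (Fin.last n)), (hμ (Fin.last n) r).1, (hμ 0 r).2]
  have hdom : ∀ r : Fin n, c ≤ (μ r.succ r - μ r.castSucc r) -
      ∑ j ∈ Finset.univ.erase r, |μ j.succ r - μ j.castSucc r| := fun r ↦ by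
    rw [Finset.sub_sum_erase_abs_eq_sum (Finset.mem_univ r) fun j _ ↦ hoffDiag r j]
    exact hcolSum r
  refine ⟨hdom, Matrix.det_ne_zero_of_forall_sum_abs_lt_diag _ fun r ↦ ?_⟩
  simp only [Matrix.of_apply]
  linarith [hdom r]

/-- (Lemma 6.4 / `lem:cdiagdom`.) If the kernels satisfy (PM_c) with
`c > 0`, `y ∈ S`, `t_{*j} ≤ t*_j` are points of `relint I_j(y)` and
`μ_{jr} ∈ [D₋K_r(t*_j - y_r), D₋K_r(t_{*j} - y_r)]`, then the matrix
`A = [μ_{jr} - μ_{(j-1)r}]_{j,r=1}^n` is diagonally `c`-dominant and hence invertible. -/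
theorem diagonally_dominant_matrix_lemma
    {n : ℕ} (hn : 1 ≤ n) (K : Fin n → ℝ → EReal)
    (hK : ∀ i, IsKernel (K i))
    (c : ℝ) (hc : 0 < c) (hPM : ∀ i, PMcond (K i) c)
    (y : Fin n → ℝ) (hy : y ∈ openSimplex n)
    (tlo thi : Fin (n + 1) → ℝ)
    (hle : ∀ j, tlo j ≤ thi j)
    (hlo : ∀ j : Fin (n + 1), tlo j ∈ relIntIcc (nodeLo y (j : ℕ)) (nodeHi y (j : ℕ)))
    (hhi : ∀ j : Fin (n + 1), thi j ∈ relIntIcc (nodeLo y (j : ℕ)) (nodeHi y (j : ℕ)))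
    (μ : Fin (n + 1) → Fin n → ℝ)
    (hμ : ∀ j r, μ j r ∈ Icc (Dm (toR (K r)) (thi j - y r)) (Dm (toR (K r)) (tlo j - y r))) :
    (∀ r : Fin n,
        c ≤ (μ r.succ r - μ r.castSucc r) -
          ∑ j ∈ Finset.univ.erase r, |μ j.succ r - μ j.castSucc r|) ∧
    (Matrix.of fun j r : Fin n => μ j.succ r - μ j.castSucc r).det ≠ 0 :=
  diagonally_dominant_matrix_lemma_general K hK c hc hPM y hy tlo thi hlo hhi μ hμ
end
end

section
/- Let n ≥ 1, let 0 ≤ x_0 < x_1 < ⋯ < x_n ≤ 1, let ν_1,…,ν_n > 0 and 0 < a_1,…,a_n ≤ 1, and let α_0, α_1, …, α_n > 0. If x_n - x_0 < 1, then there exist a unique constant C > 0 and a unique system of points y_1 ≤ y_2 ≤ ⋯ ≤ y_n with x_j < y_{j+1} < x_{j+1} for each j = 0,…,n-1, such that the function S(t) := C · ∏_{k=1}^n |sin(a_k π (t - y_k))|^{ν_k} satisfies S(x_j) = α_j for all j = 0,1,…,n. Moreover, if a_1 < 1, …, a_n < 1, then the same conclusion holds without the assumption x_n - x_0 < 1.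 -/
open Set Filter
open scoped BigOperators Topology

noncomputable section

/-!
Taking logarithms, `S(x_j) = α_j` reads `log C + F_j(y) = log α_j` with
`F_j(y) = ∑ₖ νₖ log |sin (aₖ π (x_j - y_k))|`; eliminating `C`, the points `y` must solve
`G(y) = (log α_{i+1} - log α_i)_i` for `G(y) = (F_{i+1}(y) - F_i(y))_i` on the box
`∏ₖ (x_k, x_{k+1})`. Since `aₖ (x_n - x_0) < 1`, no sine vanishes on the box, and the Jacobian
of `G`, a matrix of cotangent differences, has nonnegative off-diagonal entries and negative
column sums. Summing the rows where a vector `d` is positive shows such a matrix kills no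
`d ≠ 0`; applied along segments, the same sum is strictly decreasing, so `G` is injective on the
convex box, and by the inverse function theorem its image is open. The image is also closed:
at a boundary point of the box some `y_k` reaches a node `x_q`, so `F_q → -∞`, while by
pigeonhole some node `x_p` is met by no `y_k` and `F_p` stays bounded, contradicting the
convergence of `F_q - F_p`, a sum of coordinates of `G`. Hence `G` maps the box onto `ℝⁿ`.
-/

open Real

lemma Real.cot_sub_cot {u v : ℝ} (hu : sin u ≠ 0) (hv : sin v ≠ 0) :
    cot u - cot v = sin (v - u) / (sin u * sin v) := by
  rw [cot_eq_cos_div_sin, cot_eq_cos_div_sin, sin_sub]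
  field_simp

lemma Real.sin_mul_pi_pos {c s : ℝ} (hc : 0 < c) (hs : 0 < s) (h : c * s < 1) :
    0 < sin (c * π * s) :=
  sin_pos_of_pos_of_lt_pi (by positivity) (by nlinarith [pi_pos])

lemma Real.sin_mul_pi_neg {c s : ℝ} (hc : 0 < c) (hs : s < 0) (h : c * -s < 1) :
    sin (c * π * s) < 0 := by
  have := sin_mul_pi_pos hc (neg_pos.mpr hs) h
  rwa [mul_neg, sin_neg, neg_pos] at this

lemma Real.sin_mul_pi_ne_zero {c s : ℝ} (hc : 0 < c) (hs : s ≠ 0) (h : c * |s| < 1) :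
    sin (c * π * s) ≠ 0 := by
  rcases hs.lt_or_gt with hs | hs
  · exact (sin_mul_pi_neg hc hs (by rwa [abs_of_neg hs] at h)).ne
  · exact (sin_mul_pi_pos hc hs (by rwa [abs_of_pos hs] at h)).ne'

lemma Real.hasStrictDerivAt_log_abs_sin_mul {c s : ℝ} (h : sin (c * s) ≠ 0) :
    HasStrictDerivAt (fun t => log |sin (c * t)|) (c * cot (c * s)) s := by
  simp_rw [log_abs]
  convert (((hasStrictDerivAt_id s).const_mul c).sin).log (by simpa using h) using 1
  · simp only [id_eq]
  · rw [cot_eq_cos_div_sin]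
    simp only [id_eq, mul_one]
    field_simp

namespace Matrix

variable {ι : Type*} [Fintype ι]

structure IsMetzlerNegColSum (A : Matrix ι ι ℝ) : Prop where
  offDiag_nonneg : ∀ i k, i ≠ k → 0 ≤ A i k
  colSum_neg : ∀ k, ∑ i, A i k < 0

namespace IsMetzlerNegColSum

variable {A : Matrix ι ι ℝ}

lemma sum_mulVec_filter_pos_neg (hA : A.IsMetzlerNegColSum) {d : ι → ℝ} (hd : ∃ k, 0 < d k) :
    ∑ i ∈ Finset.univ.filter (0 < d ·), (A *ᵥ d) i < 0 := by
  classical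
  set P := Finset.univ.filter (0 < d ·)
  have hterm : ∀ k,
      (∑ i ∈ P, A i k) * d k ≤ 0 ∧ (0 < d k → (∑ i ∈ P, A i k) * d k < 0) := by
    intro k
    by_cases hk : 0 < d k
    · have hle : ∑ i ∈ P, A i k ≤ ∑ i, A i k :=
        Finset.sum_le_sum_of_subset_of_nonneg (Finset.subset_univ P) fun i _ hi =>
          hA.offDiag_nonneg i k fun hik => hi (by simpa [P, hik] using hk)
      have := mul_neg_of_neg_of_pos (hle.trans_lt (hA.colSum_neg k)) hk
      exact ⟨this.le, fun _ => this⟩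
    · have hnn : 0 ≤ ∑ i ∈ P, A i k := Finset.sum_nonneg fun i hi =>
        hA.offDiag_nonneg i k fun hik => hk (by simpa [P, hik] using hi)
      exact ⟨mul_nonpos_of_nonneg_of_nonpos hnn (not_lt.mp hk), fun h => absurd h hk⟩
  obtain ⟨k₀, hk₀⟩ := hd
  calc ∑ i ∈ P, (A *ᵥ d) i = ∑ k, (∑ i ∈ P, A i k) * d k := by
        simp only [mulVec, dotProduct, Finset.sum_mul]
        exact Finset.sum_comm
    _ < 0 :=
      Finset.sum_neg' (fun k _ => (hterm k).1) ⟨k₀, Finset.mem_univ _, (hterm k₀).2 hk₀⟩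

lemma mulVec_injective (hA : A.IsMetzlerNegColSum) : Function.Injective A.mulVec := by
  have hnonpos : ∀ d, A *ᵥ d = 0 → ∀ k, d k ≤ 0 := fun d hd => by
    by_contra! hpos
    simpa [hd] using hA.sum_mulVec_filter_pos_neg hpos
  rw [← coe_mulVecLin, ← LinearMap.ker_eq_bot, LinearMap.ker_eq_bot']
  intro d hd
  rw [mulVecLin_apply] at hd
  funext k
  have hneg : A *ᵥ -d = 0 := by rw [mulVec_neg, hd, neg_zero]
  exact le_antisymm (hnonpos d hd k) (by simpa using hnonpos (-d) hneg k)

lemma mulVec_surjective [DecidableEq ι] (hA : A.IsMetzlerNegColSum) :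
    Function.Surjective A.mulVec :=
  mulVec_surjective_iff_isUnit.mpr (mulVec_injective_iff_isUnit.mp hA.mulVec_injective)

end IsMetzlerNegColSum

end Matrix

section GlobalInversion

variable {ι : Type*} [Fintype ι] {U : Set (ι → ℝ)} {f : (ι → ℝ) → ι → ℝ}
  {A : (ι → ℝ) → Matrix ι ι ℝ}

lemma ne_of_hasFDerivAt_isMetzlerNegColSum (hU : Convex ℝ U)
    (hf : ∀ y ∈ U, HasFDerivAt f (LinearMap.toContinuousLinearMap (A y).mulVecLin) y)
    (hA : ∀ y ∈ U, (A y).IsMetzlerNegColSum) {y y' : ι → ℝ} (hy : y ∈ U) (hy' : y' ∈ U)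
    (hlt : ∃ k, y k < y' k) : f y ≠ f y' := by
  set d := y' - y
  set P := Finset.univ.filter (0 < d ·)
  set φ : ℝ → ℝ := fun t => ∑ i ∈ P, f (y + t • d) i
  have hseg : ∀ t ∈ Icc (0 : ℝ) 1, y + t • d ∈ U := fun _ => hU.add_smul_sub_mem hy hy'
  have hφ : ∀ t ∈ Icc (0 : ℝ) 1,
      HasDerivAt φ (∑ i ∈ P, (A (y + t • d)).mulVec d i) t := by
    intro t ht
    have hline : HasDerivAt (fun s : ℝ => y + s • d) d t := by
      simpa using ((hasDerivAt_id t).smul_const d).const_add y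
    have hcomp := (hf _ (hseg t ht)).comp_hasDerivAt t hline
    refine HasDerivAt.fun_sum fun i _ => ?_
    simpa using (hasDerivAt_pi.mp hcomp) i
  have hanti : StrictAntiOn φ (Icc 0 1) := by
    refine strictAntiOn_of_hasDerivWithinAt_neg (convex_Icc 0 1)
      (fun t ht => (hφ t ht).continuousAt.continuousWithinAt)
      (fun t ht => (hφ t (interior_subset ht)).hasDerivWithinAt) fun t ht => ?_
    exact (hA _ (hseg t (interior_subset ht))).sum_mulVec_filter_pos_neg (d := d)
      (by simpa [d, sub_pos] using hlt)
  intro hff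
  have h01 := hanti (left_mem_Icc.mpr zero_le_one) (right_mem_Icc.mpr zero_le_one) zero_lt_one
  simp [φ, d, hff] at h01

lemma injOn_of_hasFDerivAt_isMetzlerNegColSum (hU : Convex ℝ U)
    (hf : ∀ y ∈ U, HasFDerivAt f (LinearMap.toContinuousLinearMap (A y).mulVecLin) y)
    (hA : ∀ y ∈ U, (A y).IsMetzlerNegColSum) : InjOn f U := by
  intro y hy y' hy' hff
  by_contra hne
  obtain ⟨k, hk⟩ := Function.ne_iff.mp hne
  rcases hk.lt_or_gt with hlt | hgt
  · exact ne_of_hasFDerivAt_isMetzlerNegColSum hU hf hA hy hy' ⟨k, hlt⟩ hff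
  · exact ne_of_hasFDerivAt_isMetzlerNegColSum hU hf hA hy' hy ⟨k, hgt⟩ hff.symm

end GlobalInversion

lemma isOpen_image_of_hasStrictFDerivAt {𝕜 E F : Type*} [NontriviallyNormedField 𝕜]
    [NormedAddCommGroup E] [NormedSpace 𝕜 E] [CompleteSpace E] [NormedAddCommGroup F]
    [NormedSpace 𝕜 F] [CompleteSpace F] {U : Set E} {f : E → F} {f' : E → E →L[𝕜] F}
    (hU : IsOpen U) (hf : ∀ y ∈ U, HasStrictFDerivAt f (f' y) y)
    (hsurj : ∀ y ∈ U, (f' y : E →ₗ[𝕜] F).range = ⊤) : IsOpen (f '' U) := by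
  refine isOpen_iff_mem_nhds.mpr ?_
  rintro _ ⟨y, hy, rfl⟩
  rw [← (hf y hy).map_nhds_eq_of_surj (hsurj y hy)]
  exact image_mem_map (hU.mem_nhds hy)

lemma Fin.sum_castSucc_sub_succ {M : Type*} [AddCommGroup M] {n : ℕ} (g : Fin (n + 1) → M) :
    ∑ i : Fin n, (g i.castSucc - g i.succ) = g 0 - g (Fin.last n) := by
  induction n with
  | zero => simp
  | succ n ih =>
    have := ih (g ∘ Fin.castSucc)
    simp only [Function.comp_apply, ← Fin.succ_castSucc] at this
    rw [Fin.sum_univ_castSucc, this]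
    simp

lemma exists_forall_ne_of_injective {m : ℕ} {β : Type*} {x : Fin (m + 1) → β}
    (hx : Function.Injective x) (y : Fin m → β) : ∃ j, ∀ k, y k ≠ x j := by
  by_contra! h
  choose g hg using h
  have hg' : Function.Injective g := fun j j' hjj' => hx (by rw [← hg j, ← hg j', hjj'])
  simpa using Fintype.card_le_of_injective g hg'

lemma exists_tendsto_sub_zero {α G : Type*} [AddCommGroup G] [TopologicalSpace G]
    [IsTopologicalAddGroup G] {l : Filter α} {n : ℕ} {g : α → Fin (n + 1) → G}
    (h : ∀ i : Fin n, ∃ c, Tendsto (fun m => g m i.succ - g m i.castSucc) l (𝓝 c))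
    (j : Fin (n + 1)) : ∃ c, Tendsto (fun m => g m j - g m 0) l (𝓝 c) := by
  induction j using Fin.induction with
  | zero => exact ⟨0, by simpa using tendsto_const_nhds⟩
  | succ i ih =>
    obtain ⟨c, hc⟩ := ih
    obtain ⟨c', hc'⟩ := h i
    refine ⟨c + c', ?_⟩
    convert hc.add hc' using 1
    ext m
    abel

lemma forall_mul_eq_iff_log_sub_eq {n : ℕ} {C : ℝ} {p α : Fin (n + 1) → ℝ} (hC : 0 < C)
    (hp : ∀ j, 0 < p j) (hα : ∀ j, 0 < α j) :
    (∀ j, C * p j = α j) ↔ C * p 0 = α 0 ∧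
      ∀ i : Fin n, log (p i.succ) - log (p i.castSucc) =
        log (α i.succ) - log (α i.castSucc) := by
  have hlog : ∀ j, log (C * p j) = log C + log (p j) := fun j => log_mul hC.ne' (hp j).ne'
  refine ⟨fun h => ⟨h 0, fun i => ?_⟩, fun ⟨h0, hi⟩ j => ?_⟩
  · rw [← h i.succ, ← h i.castSucc, hlog, hlog]
    ring
  induction j using Fin.induction with
  | zero => exact h0
  | succ i ih =>
    refine log_injOn_pos (mul_pos hC (hp _)) (hα _) ?_
    have := congrArg log ih
    rw [hlog] at this ⊢
    linarith [hi i]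

namespace TrigLagrange

variable {n : ℕ}

section Definitions

variable (x : Fin (n + 1) → ℝ) (ν a : Fin n → ℝ)

def box : Set (Fin n → ℝ) := univ.pi fun k => Ioo (x k.castSucc) (x k.succ)

def closedBox : Set (Fin n → ℝ) := univ.pi fun k => Icc (x k.castSucc) (x k.succ)

def logProd (y : Fin n → ℝ) (j : Fin (n + 1)) : ℝ :=
  ∑ k, ν k * log |sin (a k * π * (x j - y k))|

def logRatio (y : Fin n → ℝ) (i : Fin n) : ℝ :=
  logProd x ν a y i.succ - logProd x ν a y i.castSucc

def jacobian (y : Fin n → ℝ) : Matrix (Fin n) (Fin n) ℝ := fun i k =>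
  ν k * (a k * π) * (cot (a k * π * (x i.castSucc - y k)) - cot (a k * π * (x i.succ - y k)))

end Definitions

variable {x : Fin (n + 1) → ℝ} {ν a : Fin n → ℝ} {y : Fin n → ℝ}

lemma mem_box : y ∈ box x ↔ ∀ k, x k.castSucc < y k ∧ y k < x k.succ := mem_univ_pi

lemma isOpen_box : IsOpen (box x) := isOpen_set_pi finite_univ fun _ _ => isOpen_Ioo

lemma convex_box : Convex ℝ (box x) := convex_pi fun _ _ => convex_Ioo _ _

lemma isCompact_closedBox : IsCompact (closedBox x) := isCompact_univ_pi fun _ => isCompact_Icc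

lemma box_subset_closedBox : box x ⊆ closedBox x :=
  pi_mono fun _ _ => Ioo_subset_Icc_self

lemma box_nonempty (hx : StrictMono x) : (box x).Nonempty :=
  univ_pi_nonempty_iff.mpr fun _ => nonempty_Ioo.mpr (hx Fin.castSucc_lt_succ)

lemma monotone_of_mem_box (hx : Monotone x) (hy : y ∈ box x) : Monotone y := by
  intro k k' hkk'
  rcases hkk'.eq_or_lt with rfl | hlt
  · exact le_rfl
  · calc y k ≤ x k.succ := ((mem_box.mp hy) k).2.le
      _ ≤ x k'.castSucc := hx (Fin.succ_le_castSucc_iff.mpr hlt)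
      _ ≤ y k' := ((mem_box.mp hy) k').1.le

lemma abs_sub_le_of_mem_closedBox (hx : Monotone x) (hy : y ∈ closedBox x) (j : Fin (n + 1))
    (k : Fin n) : |x j - y k| ≤ x (Fin.last n) - x 0 := by
  have hyk := (mem_univ_pi.mp hy) k
  have := hx (Fin.zero_le k.castSucc)
  have := hx (Fin.le_last k.succ)
  have := hx (Fin.zero_le j)
  have := hx (Fin.le_last j)
  rw [abs_le]
  constructor <;> linarith [hyk.1, hyk.2]

lemma sub_neg_of_mem_box (hx : Monotone x) (hy : y ∈ box x) {j : Fin (n + 1)} {k : Fin n}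
    (h : j ≤ k.castSucc) : x j - y k < 0 :=
  sub_neg.mpr ((hx h).trans_lt ((mem_box.mp hy) k).1)

lemma sub_pos_of_mem_box (hx : Monotone x) (hy : y ∈ box x) {j : Fin (n + 1)} {k : Fin n}
    (h : k.succ ≤ j) : 0 < x j - y k :=
  sub_pos.mpr (((mem_box.mp hy) k).2.trans_le (hx h))

lemma ne_of_mem_box (hx : Monotone x) (hy : y ∈ box x) (j : Fin (n + 1)) (k : Fin n) :
    y k ≠ x j := by
  intro hyx
  rcases lt_or_ge j k.succ with h | h
  · simpa [hyx] using sub_neg_of_mem_box hx hy (Fin.le_castSucc_iff.mpr h)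
  · simpa [hyx] using sub_pos_of_mem_box hx hy h

lemma exists_eq_of_mem_closedBox_of_notMem_box (hy : y ∈ closedBox x) (hy' : y ∉ box x) :
    ∃ j k, y k = x j := by
  obtain ⟨k, hk⟩ := not_forall.mp (mt mem_box.mpr hy')
  obtain ⟨h₁, h₂⟩ := (mem_univ_pi.mp hy) k
  rcases h₁.eq_or_lt with h | h
  · exact ⟨_, k, h.symm⟩
  rcases h₂.eq_or_lt with h' | h'
  · exact ⟨_, k, h'⟩
  exact absurd ⟨h, h'⟩ hk

lemma mul_abs_sub_lt_one (hx : Monotone x) (ha : ∀ k, 0 < a k)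
    (hspan : ∀ k, a k * (x (Fin.last n) - x 0) < 1) (hy : y ∈ closedBox x) (j : Fin (n + 1))
    (k : Fin n) : a k * |x j - y k| < 1 :=
  (mul_le_mul_of_nonneg_left (abs_sub_le_of_mem_closedBox hx hy j k) (ha k).le).trans_lt
    (hspan k)

lemma sin_ne_zero_of_mem_closedBox (hx : Monotone x) (ha : ∀ k, 0 < a k)
    (hspan : ∀ k, a k * (x (Fin.last n) - x 0) < 1) (hy : y ∈ closedBox x) {j : Fin (n + 1)}
    {k : Fin n} (hne : y k ≠ x j) : sin (a k * π * (x j - y k)) ≠ 0 :=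
  sin_mul_pi_ne_zero (ha k) (sub_ne_zero.mpr hne.symm) (mul_abs_sub_lt_one hx ha hspan hy j k)

lemma sin_ne_zero_of_mem_box (hx : Monotone x) (ha : ∀ k, 0 < a k)
    (hspan : ∀ k, a k * (x (Fin.last n) - x 0) < 1) (hy : y ∈ box x) (j : Fin (n + 1))
    (k : Fin n) : sin (a k * π * (x j - y k)) ≠ 0 :=
  sin_ne_zero_of_mem_closedBox hx ha hspan (box_subset_closedBox hy) (ne_of_mem_box hx hy j k)

lemma sin_neg_of_mem_box (hx : Monotone x) (ha : ∀ k, 0 < a k)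
    (hspan : ∀ k, a k * (x (Fin.last n) - x 0) < 1) (hy : y ∈ box x) {j : Fin (n + 1)}
    {k : Fin n} (h : j ≤ k.castSucc) : sin (a k * π * (x j - y k)) < 0 := by
  have hneg := sub_neg_of_mem_box hx hy h
  have := mul_abs_sub_lt_one hx ha hspan (box_subset_closedBox hy) j k
  exact sin_mul_pi_neg (ha k) hneg (by rwa [abs_of_neg hneg] at this)

lemma sin_pos_of_mem_box (hx : Monotone x) (ha : ∀ k, 0 < a k)
    (hspan : ∀ k, a k * (x (Fin.last n) - x 0) < 1) (hy : y ∈ box x) {j : Fin (n + 1)}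
    {k : Fin n} (h : k.succ ≤ j) : 0 < sin (a k * π * (x j - y k)) := by
  have hpos := sub_pos_of_mem_box hx hy h
  have := mul_abs_sub_lt_one hx ha hspan (box_subset_closedBox hy) j k
  exact sin_mul_pi_pos (ha k) hpos (by rwa [abs_of_pos hpos] at this)

lemma sin_sub_nodes_pos (hx : StrictMono x) (ha : ∀ k, 0 < a k)
    (hspan : ∀ k, a k * (x (Fin.last n) - x 0) < 1) {j j' : Fin (n + 1)} (h : j < j')
    (k : Fin n) : 0 < sin (a k * π * (x j' - x j)) := by
  refine sin_mul_pi_pos (ha k) (sub_pos.mpr (hx h))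
    ((mul_le_mul_of_nonneg_left ?_ (ha k).le).trans_lt (hspan k))
  linarith [hx.monotone (Fin.zero_le j), hx.monotone (Fin.le_last j')]

lemma cot_sub_cot_of_mem_box (hx : Monotone x) (ha : ∀ k, 0 < a k)
    (hspan : ∀ k, a k * (x (Fin.last n) - x 0) < 1) (hy : y ∈ box x) (j j' : Fin (n + 1))
    (k : Fin n) :
    cot (a k * π * (x j - y k)) - cot (a k * π * (x j' - y k)) =
      sin (a k * π * (x j' - x j)) /
        (sin (a k * π * (x j - y k)) * sin (a k * π * (x j' - y k))) := by
  rw [cot_sub_cot (sin_ne_zero_of_mem_box hx ha hspan hy j k)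
    (sin_ne_zero_of_mem_box hx ha hspan hy j' k)]
  ring_nf

lemma jacobian_isMetzlerNegColSum (hx : StrictMono x) (hν : ∀ k, 0 < ν k) (ha : ∀ k, 0 < a k)
    (hspan : ∀ k, a k * (x (Fin.last n) - x 0) < 1) (hy : y ∈ box x) :
    (jacobian x ν a y).IsMetzlerNegColSum where
  offDiag_nonneg i k hik := by
    have hden : 0 < sin (a k * π * (x i.castSucc - y k)) * sin (a k * π * (x i.succ - y k)) := by
      rcases hik.lt_or_gt with h | h
      · have h' := Fin.succ_le_castSucc_iff.mpr h
        exact mul_pos_of_neg_of_neg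
          (sin_neg_of_mem_box hx.monotone ha hspan hy (Fin.castSucc_lt_succ.le.trans h'))
          (sin_neg_of_mem_box hx.monotone ha hspan hy h')
      · have h' := Fin.succ_le_castSucc_iff.mpr h
        exact mul_pos (sin_pos_of_mem_box hx.monotone ha hspan hy h')
          (sin_pos_of_mem_box hx.monotone ha hspan hy (h'.trans Fin.castSucc_lt_succ.le))
    have hnum := sin_sub_nodes_pos hx ha hspan (Fin.castSucc_lt_succ (i := i)) k
    rw [jacobian, cot_sub_cot_of_mem_box hx.monotone ha hspan hy]
    exact (mul_pos (mul_pos (hν k) (mul_pos (ha k) pi_pos)) (div_pos hnum hden)).le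
  colSum_neg k := by
    have hsum : ∑ i, jacobian x ν a y i k = ν k * (a k * π) *
        (cot (a k * π * (x 0 - y k)) - cot (a k * π * (x (Fin.last n) - y k))) := by
      rw [← Fin.sum_castSucc_sub_succ (fun j => cot (a k * π * (x j - y k))), Finset.mul_sum]
      rfl
    have hden : sin (a k * π * (x 0 - y k)) * sin (a k * π * (x (Fin.last n) - y k)) < 0 :=
      mul_neg_of_neg_of_pos (sin_neg_of_mem_box hx.monotone ha hspan hy (Fin.zero_le _))
        (sin_pos_of_mem_box hx.monotone ha hspan hy (Fin.le_last _))
    have hnum := sin_sub_nodes_pos hx ha hspan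
      (((Fin.zero_le _).trans_lt Fin.castSucc_lt_succ).trans_le (Fin.le_last k.succ)) k
    rw [hsum, cot_sub_cot_of_mem_box hx.monotone ha hspan hy]
    exact mul_neg_of_pos_of_neg (mul_pos (hν k) (mul_pos (ha k) pi_pos))
      (div_neg_of_pos_of_neg hnum hden)

lemma hasStrictFDerivAt_logProd {j : Fin (n + 1)} (h : ∀ k, sin (a k * π * (x j - y k)) ≠ 0) :
    HasStrictFDerivAt (logProd x ν a · j)
      (∑ k, (-(ν k * (a k * π * cot (a k * π * (x j - y k))))) •
        ContinuousLinearMap.proj (R := ℝ) (φ := fun _ : Fin n => ℝ) k) y := by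
  refine HasStrictFDerivAt.fun_sum fun k _ => ?_
  have hsub : HasStrictFDerivAt (fun y : Fin n → ℝ => x j - y k)
      (-ContinuousLinearMap.proj (R := ℝ) (φ := fun _ : Fin n => ℝ) k) y := by
    simpa using (hasStrictFDerivAt_apply k y).const_sub (x j)
  have := ((hasStrictDerivAt_log_abs_sin_mul (h k)).comp_hasStrictFDerivAt y hsub).const_mul (ν k)
  refine this.congr_fderiv ?_
  ext v
  simp [mul_assoc]

lemma hasStrictFDerivAt_logRatio (hx : Monotone x) (ha : ∀ k, 0 < a k)
    (hspan : ∀ k, a k * (x (Fin.last n) - x 0) < 1) (hy : y ∈ box x) :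
    HasStrictFDerivAt (logRatio x ν a)
      (LinearMap.toContinuousLinearMap (jacobian x ν a y).mulVecLin) y := by
  refine hasStrictFDerivAt_pi'.mpr fun i => ?_
  have hsin := sin_ne_zero_of_mem_box hx ha hspan hy
  refine ((hasStrictFDerivAt_logProd (hsin i.succ)).sub
    (hasStrictFDerivAt_logProd (hsin i.castSucc))).congr_fderiv ?_
  ext v
  simp only [ContinuousLinearMap.comp_apply, sub_apply,
    sum_apply, smul_apply, ContinuousLinearMap.proj_apply,
    LinearMap.coe_toContinuousLinearMap', Matrix.mulVecLin_apply, Matrix.mulVec, dotProduct,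
    jacobian, smul_eq_mul, ← Finset.sum_sub_distrib]
  exact Finset.sum_congr rfl fun k _ => by ring

lemma injOn_logRatio (hx : StrictMono x) (hν : ∀ k, 0 < ν k) (ha : ∀ k, 0 < a k)
    (hspan : ∀ k, a k * (x (Fin.last n) - x 0) < 1) : InjOn (logRatio x ν a) (box x) :=
  injOn_of_hasFDerivAt_isMetzlerNegColSum convex_box
    (fun _ hy => (hasStrictFDerivAt_logRatio hx.monotone ha hspan hy).hasFDerivAt)
    fun _ hy => jacobian_isMetzlerNegColSum hx hν ha hspan hy

lemma isOpen_image_logRatio (hx : StrictMono x) (hν : ∀ k, 0 < ν k) (ha : ∀ k, 0 < a k)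
    (hspan : ∀ k, a k * (x (Fin.last n) - x 0) < 1) : IsOpen (logRatio x ν a '' box x) :=
  isOpen_image_of_hasStrictFDerivAt isOpen_box
    (fun _ hy => hasStrictFDerivAt_logRatio hx.monotone ha hspan hy) fun _ hy => by
      rw [LinearMap.coe_toContinuousLinearMap, LinearMap.range_eq_top, Matrix.coe_mulVecLin]
      exact (jacobian_isMetzlerNegColSum hx hν ha hspan hy).mulVec_surjective

lemma tendsto_logProd_atBot {α : Type*} {l : Filter α} {ys : α → Fin n → ℝ}
    {y₀ : Fin n → ℝ}
    (hν : ∀ k, 0 < ν k) (hys : Tendsto ys l (𝓝 y₀)) {j : Fin (n + 1)} {k : Fin n}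
    (hk : y₀ k = x j) (hne : ∀ m, sin (a k * π * (x j - ys m k)) ≠ 0) :
    Tendsto (fun m => logProd x ν a (ys m) j) l atBot := by
  have hbound : ∀ m, logProd x ν a (ys m) j ≤ ν k * log |sin (a k * π * (x j - ys m k))| :=
    fun m => by
      refine (Finset.sum_le_sum_of_subset_of_nonpos' (Finset.subset_univ {k}) fun i _ _ => ?_).trans
        (Finset.sum_singleton _ _).le
      exact mul_nonpos_of_nonneg_of_nonpos (hν i).le (log_nonpos (abs_nonneg _) (abs_sin_le_one _))
  have hsin : Tendsto (fun m => |sin (a k * π * (x j - ys m k))|) l (𝓝[≠] 0) := by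
    refine tendsto_nhdsWithin_of_tendsto_nhds_of_eventually_within _ ?_
      (Eventually.of_forall fun m => abs_ne_zero.mpr (hne m))
    have : Continuous fun y : Fin n → ℝ => |sin (a k * π * (x j - y k))| := by fun_prop
    simpa [hk, Function.comp_def] using (this.tendsto y₀).comp hys
  exact tendsto_atBot_mono hbound
    ((tendsto_log_nhdsNE_zero.comp hsin).const_mul_atBot (hν k))

lemma mem_box_of_tendsto (hx : StrictMono x) (hν : ∀ k, 0 < ν k) (ha : ∀ k, 0 < a k)
    (hspan : ∀ k, a k * (x (Fin.last n) - x 0) < 1) {ys : ℕ → Fin n → ℝ}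
    {y₀ z : Fin n → ℝ} (hys : ∀ m, ys m ∈ box x) (hy₀ : y₀ ∈ closedBox x)
    (hlim : Tendsto ys atTop (𝓝 y₀))
    (hz : Tendsto (fun m => logRatio x ν a (ys m)) atTop (𝓝 z)) :
    y₀ ∈ box x := by
  by_contra hy₀'
  obtain ⟨q, k, hk⟩ := exists_eq_of_mem_closedBox_of_notMem_box hy₀ hy₀'
  obtain ⟨p, hp⟩ := exists_forall_ne_of_injective hx.injective y₀
  have hFp : Tendsto (fun m => logProd x ν a (ys m) p) atTop (𝓝 (logProd x ν a y₀ p)) :=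
    (hasStrictFDerivAt_logProd fun k =>
      sin_ne_zero_of_mem_closedBox hx.monotone ha hspan hy₀ (hp k)).continuousAt.tendsto.comp hlim
  have hFq : Tendsto (fun m => logProd x ν a (ys m) q) atTop atBot :=
    tendsto_logProd_atBot hν hlim hk fun m =>
      sin_ne_zero_of_mem_box hx.monotone ha hspan (hys m) q k
  have hF0 := exists_tendsto_sub_zero (g := fun m => logProd x ν a (ys m))
    fun i => ⟨z i, ((continuous_apply i).tendsto z).comp hz⟩
  obtain ⟨cq, hcq⟩ := hF0 q
  obtain ⟨cp, hcp⟩ := hF0 p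
  have hFq' : Tendsto (fun m => logProd x ν a (ys m) q) atTop
      (𝓝 (cq - cp + logProd x ν a y₀ p)) := by
    convert (hcq.sub hcp).add hFp using 1
    ext m
    ring
  exact not_tendsto_atBot_of_tendsto_nhds hFq' hFq

lemma isClosed_image_logRatio (hx : StrictMono x) (hν : ∀ k, 0 < ν k) (ha : ∀ k, 0 < a k)
    (hspan : ∀ k, a k * (x (Fin.last n) - x 0) < 1) : IsClosed (logRatio x ν a '' box x) := by
  refine isClosed_of_closure_subset fun z hz => ?_
  obtain ⟨zs, hzs, hlim⟩ := mem_closure_iff_seq_limit.mp hz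
  choose ys hys hyz using hzs
  obtain ⟨y₀, hy₀, φ, hφ, hconv⟩ :=
    isCompact_closedBox.tendsto_subseq fun m => box_subset_closedBox (hys m)
  have hz' : Tendsto (fun m => logRatio x ν a (ys (φ m))) atTop (𝓝 z) := by
    simpa [hyz, Function.comp_def] using hlim.comp hφ.tendsto_atTop
  have hy₀box := mem_box_of_tendsto hx hν ha hspan (fun m => hys (φ m)) hy₀ hconv hz'
  have hcont := (hasStrictFDerivAt_logRatio (ν := ν) hx.monotone ha hspan hy₀box).continuousAt
  exact ⟨y₀, hy₀box, tendsto_nhds_unique (hcont.tendsto.comp hconv) hz'⟩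

lemma image_logRatio_box (hx : StrictMono x) (hν : ∀ k, 0 < ν k) (ha : ∀ k, 0 < a k)
    (hspan : ∀ k, a k * (x (Fin.last n) - x 0) < 1) : logRatio x ν a '' box x = univ :=
  IsClopen.eq_univ
    ⟨isClosed_image_logRatio hx hν ha hspan, isOpen_image_logRatio hx hν ha hspan⟩
    ((box_nonempty hx).image _)

lemma log_prod_abs_sin_rpow {j : Fin (n + 1)} (h : ∀ k, sin (a k * π * (x j - y k)) ≠ 0) :
    log (∏ k, |sin (a k * π * (x j - y k))| ^ ν k) = logProd x ν a y j := by
  rw [log_prod fun k _ => (rpow_pos_of_pos (abs_pos.mpr (h k)) _).ne']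
  exact Finset.sum_congr rfl fun k _ => log_rpow (abs_pos.mpr (h k)) _

theorem existsUnique_interpolation (hx : StrictMono x) (hν : ∀ k, 0 < ν k) (ha : ∀ k, 0 < a k)
    (hspan : ∀ k, a k * (x (Fin.last n) - x 0) < 1) {α : Fin (n + 1) → ℝ}
    (hα : ∀ j, 0 < α j) :
    ∃! Cy : ℝ × (Fin n → ℝ), 0 < Cy.1 ∧ Monotone Cy.2 ∧
      (∀ i : Fin n, x i.castSucc < Cy.2 i ∧ Cy.2 i < x i.succ) ∧
      ∀ j : Fin (n + 1), Cy.1 * ∏ k, |sin (a k * π * (x j - Cy.2 k))| ^ (ν k) = α j := by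
  set P : (Fin n → ℝ) → Fin (n + 1) → ℝ :=
    fun y j => ∏ k, |sin (a k * π * (x j - y k))| ^ ν k
  set β : Fin n → ℝ := fun i => log (α i.succ) - log (α i.castSucc)
  have hsin {y} (hy : y ∈ box x) := sin_ne_zero_of_mem_box hx.monotone ha hspan hy
  have hP {y} (hy : y ∈ box x) (j) : 0 < P y j :=
    Finset.prod_pos fun k _ => rpow_pos_of_pos (abs_pos.mpr (hsin hy j k)) _
  have hsolves {C y} (hC : 0 < C) (hy : y ∈ box x) :
      (∀ j, C * P y j = α j) ↔ C * P y 0 = α 0 ∧ logRatio x ν a y = β := by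
    simp only [forall_mul_eq_iff_log_sub_eq hC (hP hy) hα, P, log_prod_abs_sin_rpow (hsin hy _),
      funext_iff]
    rfl
  obtain ⟨y, hy, hyβ⟩ : β ∈ logRatio x ν a '' box x :=
    image_logRatio_box hx hν ha hspan ▸ mem_univ β
  have hC : 0 < α 0 / P y 0 := div_pos (hα 0) (hP hy 0)
  refine ⟨(α 0 / P y 0, y), ⟨hC, monotone_of_mem_box hx.monotone hy, mem_box.mp hy,
    (hsolves hC hy).mpr ⟨div_mul_cancel₀ _ (hP hy 0).ne', hyβ⟩⟩, ?_⟩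
  rintro ⟨C', y'⟩ ⟨hC', -, hy', hsol⟩
  obtain ⟨h0, hβ⟩ := (hsolves hC' (mem_box.mpr hy')).mp hsol
  obtain rfl : y' = y := injOn_logRatio hx hν ha hspan (mem_box.mpr hy') hy (hβ.trans hyβ.symm)
  simp [eq_div_iff (hP hy 0).ne', h0]

end TrigLagrange

theorem trigonometric_lagrange_interpolation_general
    {n : ℕ}
    (x : Fin (n + 1) → ℝ) (hx : StrictMono x) (hx01 : ∀ j, x j ∈ Icc (0:ℝ) 1)
    (ν a : Fin n → ℝ) (hν : ∀ k, 0 < ν k) (ha : ∀ k, 0 < a k ∧ a k ≤ 1)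
    (α : Fin (n + 1) → ℝ) (hα : ∀ j, 0 < α j) :
    (x (Fin.last n) - x 0 < 1 →
      ∃! Cy : ℝ × (Fin n → ℝ), 0 < Cy.1 ∧ Monotone Cy.2 ∧
        (∀ i : Fin n, x i.castSucc < Cy.2 i ∧ Cy.2 i < x i.succ) ∧
        ∀ j : Fin (n + 1),
          Cy.1 * ∏ k, |Real.sin (a k * Real.pi * (x j - Cy.2 k))| ^ (ν k) = α j) ∧
    ((∀ k, a k < 1) →
      ∃! Cy : ℝ × (Fin n → ℝ), 0 < Cy.1 ∧ Monotone Cy.2 ∧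
        (∀ i : Fin n, x i.castSucc < Cy.2 i ∧ Cy.2 i < x i.succ) ∧
        ∀ j : Fin (n + 1),
          Cy.1 * ∏ k, |Real.sin (a k * Real.pi * (x j - Cy.2 k))| ^ (ν k) = α j) := by
  have hspan_nonneg : 0 ≤ x (Fin.last n) - x 0 := sub_nonneg.mpr (hx.monotone (Fin.zero_le _))
  have hspan_le_one : x (Fin.last n) - x 0 ≤ 1 := by linarith [(hx01 (Fin.last n)).2, (hx01 0).1]
  have key := fun hspan =>
    TrigLagrange.existsUnique_interpolation hx hν (fun k => (ha k).1) hspan hα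
  refine ⟨fun hlt => key fun k => ?_, fun hlt => key fun k => ?_⟩
  · calc a k * (x (Fin.last n) - x 0) ≤ 1 * (x (Fin.last n) - x 0) :=
          mul_le_mul_of_nonneg_right (ha k).2 hspan_nonneg
      _ < 1 := by linarith
  · calc a k * (x (Fin.last n) - x 0) ≤ a k * 1 :=
          mul_le_mul_of_nonneg_left hspan_le_one (ha k).1.le
      _ < 1 := by linarith [hlt k]

/-- (Trigonometric Lagrange interpolation.) For exponents `ν_k > 0`,
frequencies `0 < a_k ≤ 1` and positive values `α_j`: if `x_n - x_0 < 1` then there are a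
unique `C > 0` and unique interlacing points `y` such that
`S(t) = C ∏_k |sin(a_k π (t - y_k))|^{ν_k}` satisfies `S(x_j) = α_j` for all `j`;
moreover, if all `a_k < 1`, the same holds without the assumption `x_n - x_0 < 1`. -/
theorem trigonometric_lagrange_interpolation
    {n : ℕ} (hn : 1 ≤ n)
    (x : Fin (n + 1) → ℝ) (hx : StrictMono x) (hx01 : ∀ j, x j ∈ Icc (0:ℝ) 1)
    (ν a : Fin n → ℝ) (hν : ∀ k, 0 < ν k) (ha : ∀ k, 0 < a k ∧ a k ≤ 1)
    (α : Fin (n + 1) → ℝ) (hα : ∀ j, 0 < α j) :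
    (x (Fin.last n) - x 0 < 1 →
      ∃! Cy : ℝ × (Fin n → ℝ), 0 < Cy.1 ∧ Monotone Cy.2 ∧
        (∀ i : Fin n, x i.castSucc < Cy.2 i ∧ Cy.2 i < x i.succ) ∧
        ∀ j : Fin (n + 1),
          Cy.1 * ∏ k, |Real.sin (a k * Real.pi * (x j - Cy.2 k))| ^ (ν k) = α j) ∧
    ((∀ k, a k < 1) →
      ∃! Cy : ℝ × (Fin n → ℝ), 0 < Cy.1 ∧ Monotone Cy.2 ∧
        (∀ i : Fin n, x i.castSucc < Cy.2 i ∧ Cy.2 i < x i.succ) ∧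
        ∀ j : Fin (n + 1),
          Cy.1 * ∏ k, |Real.sin (a k * Real.pi * (x j - Cy.2 k))| ^ (ν k) = α j) :=
  trigonometric_lagrange_interpolation_general x hx hx01 ν a hν ha α hα
end
end
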